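/- Let X ∈ ℝ^{n×p}, let 𝓔 be a set of pairs (i,j) with 1 ≤ i < j ≤ n, and let A_𝓔 : ℝ^{n×p} → ℝ^{𝓔×p} be the linear map (A_𝓔 U)_{(i,j),k} = u_{i,k} − u_{j,k}. Let h : ℝ^{𝓔×p} → ℝ be closed convex, ν > 0, Λ ∈ ℝ^{𝓔×p}, set f(U) := (1/2)‖X − U‖²_F, and define φ₁(U) := f(U) + min_V { h(V) + ⟨Λ, V − A_𝓔 U⟩ + (ν/2)‖V − A_𝓔 U‖²_F }. Then ∇_U φ₁ is Lipschitz continuous with constant 1 + ν·λ_max(A_𝓔ᵀA_𝓔) with respect to the Frobenius norm: ‖∇φ₁(U₁) − ∇φ₁(U₂)‖_F ≤ (1 + ν·λ_max(A_𝓔ᵀA_𝓔))‖U₁ − U₂‖_F for all U₁, U₂ ∈ ℝ^{n×p}. -/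

import Mathlib

/-!
Write `φ₁ = ½‖X - ·‖² + g ∘ A_𝓔` with `g(W) = inf_V {h V + ⟪Λ, V - W⟫ + (ν/2)‖V - W‖²}`; the
infimum is finite because the closed convex `h` has an affine minorant. The integrand is jointly
convex in `(V, W)`, so `g` is convex; and `(ν/2)‖W‖² - g(W)` is a supremum of affine functions
of `W`, so it is convex too. Since `‖A_𝓔 U‖² ≤ λ_max ‖U‖²`, both `φ₁` and `(L/2)‖·‖² - φ₁` are
convex for `L = 1 + ν λ_max`. For a differentiable function with these two properties the
gradient is co-coercive, `‖∇φ₁ U₁ - ∇φ₁ U₂‖² ≤ L ⟪∇φ₁ U₁ - ∇φ₁ U₂, U₁ - U₂⟫`, which by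
Cauchy–Schwarz gives the Lipschitz bound.
-/

open scoped RealInnerProductSpace
open Set

section PartialInfimum

variable {ι V W : Type*} [AddCommGroup V] [Module ℝ V] [AddCommGroup W] [Module ℝ W]

theorem convexOn_ciInf_of_convexOn_uncurry {Φ : V → W → ℝ}
    (hΦ : ConvexOn ℝ univ (Function.uncurry Φ)) (hbdd : ∀ w, BddBelow (range (Φ · w))) :
    ConvexOn ℝ univ fun w => ⨅ v, Φ v w := by
  refine ⟨convex_univ, fun x _ y _ a b ha hb hab => ?_⟩
  simp only [smul_eq_mul]
  refine le_of_forall_pos_le_add fun ε hε => ?_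
  obtain ⟨v₁, hv₁⟩ := exists_lt_of_ciInf_lt (lt_add_of_pos_right (⨅ v, Φ v x) hε)
  obtain ⟨v₂, hv₂⟩ := exists_lt_of_ciInf_lt (lt_add_of_pos_right (⨅ v, Φ v y) hε)
  have hjoint := hΦ.2 (mem_univ (v₁, x)) (mem_univ (v₂, y)) ha hb hab
  simp only [Prod.smul_mk, Prod.mk_add_mk, Function.uncurry_apply_pair, smul_eq_mul] at hjoint
  calc ⨅ v, Φ v (a • x + b • y) ≤ Φ (a • v₁ + b • v₂) (a • x + b • y) := ciInf_le (hbdd _) _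
    _ ≤ a * Φ v₁ x + b * Φ v₂ y := hjoint
    _ ≤ a * ((⨅ v, Φ v x) + ε) + b * ((⨅ v, Φ v y) + ε) := by gcongr
    _ = a * (⨅ v, Φ v x) + b * (⨅ v, Φ v y) + ε := by linear_combination ε * hab

theorem convexOn_sub_ciInf [Nonempty ι] {q : W → ℝ} {Φ : ι → W → ℝ}
    (hΦ : ∀ i, ConvexOn ℝ univ fun w => q w - Φ i w) (hbdd : ∀ w, BddBelow (range (Φ · w))) :
    ConvexOn ℝ univ fun w => q w - ⨅ i, Φ i w := by
  refine ⟨convex_univ, fun x _ y _ a b ha hb hab => ?_⟩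
  suffices q (a • x + b • y) - a * (q x - ⨅ i, Φ i x) - b * (q y - ⨅ i, Φ i y) ≤
      ⨅ i, Φ i (a • x + b • y) by simp only [smul_eq_mul]; linarith
  refine le_ciInf fun i => ?_
  have hi := (hΦ i).2 (mem_univ x) (mem_univ y) ha hb hab
  have hx := ciInf_le (hbdd x) i
  have hy := ciInf_le (hbdd y) i
  simp only [smul_eq_mul] at hi
  nlinarith

end PartialInfimum

section AugmentedLagrangian

variable {F : Type*} [NormedAddCommGroup F] [InnerProductSpace ℝ F] {h : F → ℝ} {Λ : F} {ν : ℝ}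

/-- The augmented Lagrangian of the constraint `v = w` with multiplier `Λ` and penalty `ν`. -/
noncomputable def augmentedLagrangian (h : F → ℝ) (Λ : F) (ν : ℝ) (v w : F) : ℝ :=
  h v + ⟪Λ, v - w⟫ + ν / 2 * ‖v - w‖ ^ 2

noncomputable def augmentedEnvelope (h : F → ℝ) (Λ : F) (ν : ℝ) (w : F) : ℝ :=
  ⨅ v, augmentedLagrangian h Λ ν v w

theorem bddBelow_range_augmentedLagrangian (l : F →L[ℝ] ℝ) (c : ℝ) (hl : ∀ v, l v + c ≤ h v)
    (hν : 0 < ν) (w : F) : BddBelow (range (augmentedLagrangian h Λ ν · w)) := by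
  set K := ‖l‖ + ‖Λ‖
  refine ⟨l w + c - K ^ 2 / (2 * ν), ?_⟩
  rintro - ⟨v, rfl⟩
  have hl' : l w - ‖l‖ * ‖v - w‖ ≤ l v := by
    have := (le_abs_self _).trans (l.le_opNorm (w - v))
    rw [map_sub, norm_sub_rev] at this
    linarith
  have hΛ : -(‖Λ‖ * ‖v - w‖) ≤ ⟪Λ, v - w⟫ := (abs_le.mp (abs_real_inner_le_norm _ _)).1
  have hsq : 0 ≤ (ν * ‖v - w‖ - K) ^ 2 / (2 * ν) := by positivity
  have hexpand : (ν * ‖v - w‖ - K) ^ 2 / (2 * ν) =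
      ν / 2 * ‖v - w‖ ^ 2 - K * ‖v - w‖ + K ^ 2 / (2 * ν) := by
    field_simp
    ring
  unfold augmentedLagrangian
  linarith [hl v]

theorem convexOn_augmentedEnvelope (hh : ConvexOn ℝ univ h) (hν : 0 ≤ ν)
    (hbdd : ∀ w, BddBelow (range (augmentedLagrangian h Λ ν · w))) :
    ConvexOn ℝ univ (augmentedEnvelope h Λ ν) := by
  refine convexOn_ciInf_of_convexOn_uncurry ?_ hbdd
  let δ : F × F →ₗ[ℝ] F := LinearMap.fst ℝ F F - LinearMap.snd ℝ F F
  have hpenalty : ConvexOn ℝ univ fun p : F × F => ν / 2 * ‖δ p‖ ^ 2 :=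
    (((convexOn_norm convex_univ).pow (fun _ _ => norm_nonneg _) 2).comp_linearMap δ).smul
      (by positivity)
  exact ((hh.comp_linearMap (LinearMap.fst ℝ F F)).add
    (((innerₛₗ ℝ Λ).comp δ).convexOn convex_univ)).add hpenalty

theorem convexOn_sq_norm_sub_augmentedEnvelope
    (hbdd : ∀ w, BddBelow (range (augmentedLagrangian h Λ ν · w))) :
    ConvexOn ℝ univ fun w => ν / 2 * ‖w‖ ^ 2 - augmentedEnvelope h Λ ν w := by
  refine convexOn_sub_ciInf (fun v => ?_) hbdd
  have haffine : (fun w => ν / 2 * ‖w‖ ^ 2 - augmentedLagrangian h Λ ν v w) =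
      fun w => ⟪ν • v + Λ, w⟫ + (-(ν / 2) * ‖v‖ ^ 2 - h v - ⟪Λ, v⟫) := by
    ext w
    rw [augmentedLagrangian, norm_sub_sq_real]
    simp only [inner_sub_right, inner_add_left, real_inner_smul_left, real_inner_comm w v]
    ring
  rw [haffine]
  exact ((innerₛₗ ℝ (ν • v + Λ)).convexOn convex_univ).add_const _

end AugmentedLagrangian

section Quadratic

variable {E F : Type*} [NormedAddCommGroup E] [InnerProductSpace ℝ E]
  [NormedAddCommGroup F] [InnerProductSpace ℝ F]

theorem norm_smul_add_smul_sq (u v : E) {a b : ℝ} (hab : a + b = 1) :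
    ‖a • u + b • v‖ ^ 2 = a * ‖u‖ ^ 2 + b * ‖v‖ ^ 2 - a * b * ‖u - v‖ ^ 2 := by
  simp only [← real_inner_self_eq_norm_sq, inner_add_left, inner_add_right, inner_sub_left,
    inner_sub_right, real_inner_smul_left, real_inner_smul_right]
  linear_combination (a * ⟪u, u⟫ + b * ⟪v, v⟫) * hab

theorem convexOn_mul_sq_norm_sub_sq_norm_apply (T : E →ₗ[ℝ] F) {μ : ℝ}
    (hT : ∀ u, ‖T u‖ ^ 2 ≤ μ * ‖u‖ ^ 2) :
    ConvexOn ℝ univ fun u => μ * ‖u‖ ^ 2 - ‖T u‖ ^ 2 := by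
  refine ⟨convex_univ, fun x _ y _ a b ha hb hab => ?_⟩
  simp only [smul_eq_mul, map_add, map_smul]
  rw [norm_smul_add_smul_sq x y hab, norm_smul_add_smul_sq (T x) (T y) hab, ← map_sub]
  have := mul_nonneg (mul_nonneg ha hb) (sub_nonneg.2 (hT (x - y)))
  linarith

theorem LinearMap.IsSymmetric.inner_apply_self_le [FiniteDimensional ℝ E] {S : E →ₗ[ℝ] E}
    (hS : S.IsSymmetric) {μ : ℝ} (hμ : ∀ c, Module.End.HasEigenvalue S c → c ≤ μ) (u : E) :
    ⟪S u, u⟫ ≤ μ * ‖u‖ ^ 2 := by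
  set b := hS.eigenvectorBasis rfl
  have hb : ∀ i, S (b i) = hS.eigenvalues rfl i • b i := hS.apply_eigenvectorBasis rfl
  calc ⟪S u, u⟫ = ∑ i, ⟪S u, b i⟫ * ⟪b i, u⟫ := (b.sum_inner_mul_inner _ _).symm
    _ = ∑ i, hS.eigenvalues rfl i * ⟪b i, u⟫ ^ 2 := by
      refine Finset.sum_congr rfl fun i _ => ?_
      rw [hS u (b i), hb, real_inner_smul_right, real_inner_comm u]
      ring
    _ ≤ ∑ i, μ * ⟪b i, u⟫ ^ 2 := by
      gcongr with i
      exact hμ _ (hS.hasEigenvalue_eigenvalues rfl i)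
    _ = μ * ‖u‖ ^ 2 := by rw [← Finset.mul_sum, b.sum_sq_inner_right]

theorem LinearMap.sq_norm_apply_le_of_hasEigenvalue_le [FiniteDimensional ℝ E]
    [FiniteDimensional ℝ F] (T : E →ₗ[ℝ] F) {μ : ℝ}
    (hμ : ∀ c, Module.End.HasEigenvalue (T.adjoint ∘ₗ T) c → c ≤ μ) (u : E) :
    ‖T u‖ ^ 2 ≤ μ * ‖u‖ ^ 2 := by
  have h := T.isPositive_adjoint_comp_self.isSymmetric.inner_apply_self_le hμ u
  rwa [LinearMap.comp_apply, LinearMap.adjoint_inner_left, real_inner_self_eq_norm_sq] at h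

end Quadratic

section Smoothness

variable {E : Type*} [NormedAddCommGroup E] [InnerProductSpace ℝ E] [CompleteSpace E]
  {f : E → ℝ} {f' : E → E} {L : ℝ}

theorem ConvexOn.add_inner_gradient_le (hf : ConvexOn ℝ univ f) {x g : E}
    (hg : HasGradientAt f g x) (y : E) : f x + ⟪g, y - x⟫ ≤ f y := by
  have hline : HasDerivAt (f ∘ (AffineMap.lineMap x y : ℝ → E)) ⟪g, y - x⟫ 0 := by
    have hF : HasFDerivAt f (InnerProductSpace.toDual ℝ E g) (AffineMap.lineMap x y (0 : ℝ)) := by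
      simpa using hg.hasFDerivAt
    simpa using hF.comp_hasDerivAt 0 AffineMap.hasDerivAt_lineMap
  have := (hf.comp_affineMap (AffineMap.lineMap x y)).le_slope_of_hasDerivAt
    (mem_univ 0) (mem_univ 1) zero_lt_one hline
  simp only [slope_def_field, Function.comp_apply, AffineMap.lineMap_apply_one,
    AffineMap.lineMap_apply_zero, sub_zero, div_one] at this
  linarith

theorem HasGradientAt.mul_sq_norm_sub {x g : E} (hg : HasGradientAt f g x) :
    HasGradientAt (fun x => L / 2 * ‖x‖ ^ 2 - f x) (L • x - g) x := by
  rw [hasGradientAt_iff_hasFDerivAt] at hg ⊢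
  refine (((hasStrictFDerivAt_norm_sq x).hasFDerivAt.const_mul (L / 2)).sub hg).congr_fderiv ?_
  ext v
  simp only [sub_apply, smul_apply, InnerProductSpace.toDual_apply_apply, innerSL_apply_apply,
    inner_sub_left, real_inner_smul_left, smul_eq_mul, nsmul_eq_mul, Nat.cast_ofNat]
  ring

theorem le_add_inner_gradient_add_sq_norm
    (hsmooth : ConvexOn ℝ univ fun x => L / 2 * ‖x‖ ^ 2 - f x) {x g : E}
    (hg : HasGradientAt f g x) (y : E) :
    f y ≤ f x + ⟪g, y - x⟫ + L / 2 * ‖y - x‖ ^ 2 := by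
  have := hsmooth.add_inner_gradient_le hg.mul_sq_norm_sub y
  rw [norm_sub_sq_real]
  simp only [inner_sub_left, inner_sub_right, real_inner_smul_left, real_inner_self_eq_norm_sq,
    real_inner_comm x y] at this ⊢
  linarith

theorem add_inner_gradient_add_sq_norm_le (hconv : ConvexOn ℝ univ f)
    (hsmooth : ConvexOn ℝ univ fun x => L / 2 * ‖x‖ ^ 2 - f x) (hL : 0 < L)
    (hgrad : ∀ x, HasGradientAt f (f' x) x) (x y : E) :
    f x + ⟪f' x, y - x⟫ + ‖f' x - f' y‖ ^ 2 / (2 * L) ≤ f y := by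
  -- compare the lower bound at `x` with the upper bound at `y`, both at a gradient step from `y`
  set z := y - L⁻¹ • (f' y - f' x)
  have hlow := hconv.add_inner_gradient_le (hgrad x) z
  have hupp := le_add_inner_gradient_add_sq_norm hsmooth (hgrad y) z
  have hzy : z - y = -L⁻¹ • (f' y - f' x) := by simp [z, neg_smul]
  have hzx : z - x = (y - x) + -L⁻¹ • (f' y - f' x) := by rw [← hzy]; abel
  rw [hzx, inner_add_right, real_inner_smul_right] at hlow
  rw [hzy, real_inner_smul_right, norm_smul, mul_pow, Real.norm_eq_abs, sq_abs,
    norm_sub_rev] at hupp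
  have hgap : ⟪f' y, f' y - f' x⟫ - ⟪f' x, f' y - f' x⟫ = ‖f' x - f' y‖ ^ 2 := by
    rw [← inner_sub_left, real_inner_self_eq_norm_sq, norm_sub_rev]
  have hstep : ‖f' x - f' y‖ ^ 2 / (2 * L) =
      L⁻¹ * ‖f' x - f' y‖ ^ 2 - L / 2 * ((-L⁻¹) ^ 2 * ‖f' x - f' y‖ ^ 2) := by
    field_simp
    ring
  linear_combination hlow + hupp - L⁻¹ * hgap + hstep

theorem norm_sub_gradient_le_of_convexOn (hconv : ConvexOn ℝ univ f)
    (hsmooth : ConvexOn ℝ univ fun x => L / 2 * ‖x‖ ^ 2 - f x) (hL : 0 < L)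
    (hgrad : ∀ x, HasGradientAt f (f' x) x) (x y : E) :
    ‖f' x - f' y‖ ≤ L * ‖x - y‖ := by
  have hxy := add_inner_gradient_add_sq_norm_le hconv hsmooth hL hgrad x y
  have hyx := add_inner_gradient_add_sq_norm_le hconv hsmooth hL hgrad y x
  rw [norm_sub_rev (f' y)] at hyx
  have hcocoercive : ‖f' x - f' y‖ ^ 2 / L ≤ ⟪f' x - f' y, x - y⟫ := by
    have hinner : ⟪f' x - f' y, x - y⟫ = -⟪f' x, y - x⟫ - ⟪f' y, x - y⟫ := by
      simp only [inner_sub_left, inner_sub_right]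
      ring
    have hhalf : ‖f' x - f' y‖ ^ 2 / L = 2 * (‖f' x - f' y‖ ^ 2 / (2 * L)) := by field_simp
    linarith
  have hcs := hcocoercive.trans (real_inner_le_norm _ _)
  rcases (norm_nonneg (f' x - f' y)).eq_or_lt with h0 | hpos
  · rw [← h0]
    positivity
  · rw [div_le_iff₀ hL, sq] at hcs
    nlinarith

end Smoothness

theorem statement10_general {n p : ℕ}
    (𝓔 : Finset (Fin n × Fin n))
    (X : EuclideanSpace ℝ (Fin n × Fin p))
    -- `T` is the linear map `A_𝓔`
    (T : EuclideanSpace ℝ (Fin n × Fin p) →ₗ[ℝ] EuclideanSpace ℝ (↥𝓔 × Fin p))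
    (h : EuclideanSpace ℝ (↥𝓔 × Fin p) → ℝ)
    (hhconv : ConvexOn ℝ Set.univ h)
    (hhclosed : ∀ α : ℝ, IsClosed {V | h V ≤ α})
    (ν : ℝ) (hν : 0 < ν)
    (Λ : EuclideanSpace ℝ (↥𝓔 × Fin p))
    -- `μ` is the largest eigenvalue of `A_𝓔ᵀ A_𝓔`
    (μ : ℝ)
    (hμ : Module.End.HasEigenvalue ((LinearMap.adjoint T).comp T) μ)
    (hμmax : ∀ c : ℝ, Module.End.HasEigenvalue ((LinearMap.adjoint T).comp T) c → c ≤ μ)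
    -- `φ` is the function `φ₁`, with gradient `φ'`
    (φ : EuclideanSpace ℝ (Fin n × Fin p) → ℝ)
    (hφ : ∀ U, φ U = 1 / 2 * ‖X - U‖ ^ 2 + ⨅ V : EuclideanSpace ℝ (↥𝓔 × Fin p),
        (h V + ⟪Λ, V - T U⟫ + ν / 2 * ‖V - T U‖ ^ 2))
    (φ' : EuclideanSpace ℝ (Fin n × Fin p) → EuclideanSpace ℝ (Fin n × Fin p))
    (hφ' : ∀ U, HasGradientAt φ (φ' U) U) :
    ∀ U₁ U₂, ‖φ' U₁ - φ' U₂‖ ≤ (1 + ν * μ) * ‖U₁ - U₂‖ := by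
  obtain ⟨l, c, hlc, -⟩ := hhconv.exists_affine_le_of_lt (𝕜 := ℝ) (mem_univ 0)
    (sub_one_lt (h 0)) isClosed_univ
    ((lowerSemicontinuous_iff_isClosed_preimage.2 hhclosed).lowerSemicontinuousOn univ)
  have hbdd := bddBelow_range_augmentedLagrangian (Λ := Λ) l c
    (fun v => by simpa using hlc ⟨v, mem_univ v⟩) hν
  have hμ₀ : 0 ≤ μ :=
    eigenvalue_nonneg_of_nonneg hμ T.isPositive_adjoint_comp_self.re_inner_nonneg_right
  have hφ_eq : φ = fun U => 1 / 2 * dist U X ^ 2 + augmentedEnvelope h Λ ν (T U) := by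
    ext U
    rw [hφ, dist_comm, dist_eq_norm]
    rfl
  have hconv : ConvexOn ℝ univ φ := by
    rw [hφ_eq]
    exact (((convexOn_univ_dist X).pow (fun _ _ => dist_nonneg) 2).smul (by norm_num)).add
      ((convexOn_augmentedEnvelope hhconv hν.le hbdd).comp_linearMap T)
  have hsmooth : ConvexOn ℝ univ fun U => (1 + ν * μ) / 2 * ‖U‖ ^ 2 - φ U := by
    have hsplit : (fun U => (1 + ν * μ) / 2 * ‖U‖ ^ 2 - φ U) = fun U =>
        (⟪X, U⟫ + -‖X‖ ^ 2 / 2) + ν / 2 * (μ * ‖U‖ ^ 2 - ‖T U‖ ^ 2) +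
          (ν / 2 * ‖T U‖ ^ 2 - augmentedEnvelope h Λ ν (T U)) := by
      ext U
      simp only [hφ_eq, dist_eq_norm]
      rw [norm_sub_sq_real, real_inner_comm]
      ring
    rw [hsplit]
    exact ((((innerₛₗ ℝ X).convexOn convex_univ).add_const _).add
      ((convexOn_mul_sq_norm_sub_sq_norm_apply T
        (T.sq_norm_apply_le_of_hasEigenvalue_le hμmax)).smul (by positivity))).add
      ((convexOn_sq_norm_sub_augmentedEnvelope hbdd).comp_linearMap T)
  exact norm_sub_gradient_le_of_convexOn hconv hsmooth (by positivity) hφ'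

/-- Let `X ∈ ℝ^{n×p}`, `𝓔` a set of pairs `(i,j)` with `i < j`, and
`A_𝓔 : ℝ^{n×p} → ℝ^{𝓔×p}` the linear map `(A_𝓔 U)_{(i,j),k} = u_{i,k} − u_{j,k}`
(here called `T`). Let `h : ℝ^{𝓔×p} → ℝ` be closed convex, `ν > 0`, `Λ ∈ ℝ^{𝓔×p}`,
`f(U) := ½‖X − U‖²_F`, and
`φ₁(U) := f(U) + min_V { h(V) + ⟨Λ, V − A_𝓔 U⟩ + (ν/2)‖V − A_𝓔 U‖²_F }`.
Then `∇φ₁` is Lipschitz with constant `1 + ν·λ_max(A_𝓔ᵀA_𝓔)` in Frobenius norm.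
Matrices are modeled as Euclidean spaces indexed by entries (so the norm and the
trace inner product are the Euclidean ones); `μ = λ_max(A_𝓔ᵀA_𝓔)` is encoded as
an eigenvalue of `A_𝓔ᵀ ∘ A_𝓔` dominating all eigenvalues, and `φ'` is the
gradient of `φ₁`. -/
theorem statement10 {n p : ℕ}
    (𝓔 : Finset (Fin n × Fin n)) (h𝓔 : ∀ e ∈ 𝓔, e.1 < e.2)
    (X : EuclideanSpace ℝ (Fin n × Fin p))
    -- `T` is the linear map `A_𝓔`
    (T : EuclideanSpace ℝ (Fin n × Fin p) →ₗ[ℝ] EuclideanSpace ℝ (↥𝓔 × Fin p))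
    (hT : ∀ (U : EuclideanSpace ℝ (Fin n × Fin p)) (e : ↥𝓔) (k : Fin p),
      T U (e, k) = U ((e : Fin n × Fin n).1, k) - U ((e : Fin n × Fin n).2, k))
    (h : EuclideanSpace ℝ (↥𝓔 × Fin p) → ℝ)
    (hhconv : ConvexOn ℝ Set.univ h)
    (hhclosed : ∀ α : ℝ, IsClosed {V | h V ≤ α})
    (ν : ℝ) (hν : 0 < ν)
    (Λ : EuclideanSpace ℝ (↥𝓔 × Fin p))
    -- `μ` is the largest eigenvalue of `A_𝓔ᵀ A_𝓔`
    (μ : ℝ)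
    (hμ : Module.End.HasEigenvalue ((LinearMap.adjoint T).comp T) μ)
    (hμmax : ∀ c : ℝ, Module.End.HasEigenvalue ((LinearMap.adjoint T).comp T) c → c ≤ μ)
    -- `φ` is the function `φ₁`, with gradient `φ'`
    (φ : EuclideanSpace ℝ (Fin n × Fin p) → ℝ)
    (hφ : ∀ U, φ U = 1 / 2 * ‖X - U‖ ^ 2 + ⨅ V : EuclideanSpace ℝ (↥𝓔 × Fin p),
        (h V + ⟪Λ, V - T U⟫ + ν / 2 * ‖V - T U‖ ^ 2))
    (φ' : EuclideanSpace ℝ (Fin n × Fin p) → EuclideanSpace ℝ (Fin n × Fin p))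
    (hφ' : ∀ U, HasGradientAt φ (φ' U) U) :
    ∀ U₁ U₂, ‖φ' U₁ - φ' U₂‖ ≤ (1 + ν * μ) * ‖U₁ - U₂‖ :=
  statement10_general 𝓔 X T h hhconv hhclosed ν hν Λ μ hμ hμmax φ hφ φ' hφ'
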